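/- arXiv:1810.05130 — 7 statements merged into one kernel-verified Lean document; each statement's English description precedes it below -/
import Mathlib

section
/- Let Ω be a countable type, μ a probability mass function on Ω, G a finite type with |G| = n ≥ 1, and f : Ω → G any function. Write ν for the pushforward distribution of μ under f, i.e. ν(x) = Σ_{w : f(w) = x} μ(w), and write U for the uniform distribution on G, U(x) = 1/n. Then for every ω > 0, the total variation distance satisfies (1/2)·Σ_{x ∈ G} |ν(x) − 1/n| ≥ μ({w ∈ Ω : μ(w) ≥ e^ω / n}) − e^{−ω}. -/
/-!
Let `ν` be the pushforward of `μ` under `f` and `B` the set of points `x` with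
`ν x ≥ e^ω / n`. Every atom `w` of `μ` with `μ w ≥ e^ω / n` lies over a point of `B`, so
`ν B ≥ μ {w | μ w ≥ e^ω / n}`, while `ν B ≤ 1` forces `#B ≤ n e^{-ω}`, i.e. the uniform
distribution gives `B` mass at most `e^{-ω}`. The total variation distance is at least the
difference of the masses of `B`.
-/

open Finset

noncomputable def pushforward {ι G : Type*} (μ : ι → ℝ) (f : ι → G) (x : G) : ℝ :=
  ∑' w : {w // f w = x}, μ w

section Pushforward

variable {ι G : Type*} {μ : ι → ℝ} (f : ι → G)

theorem sum_pushforward [Fintype G] (hμ : Summable μ) :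
    ∑ x, pushforward μ f x = ∑' w, μ w :=
  ((hμ.hasSum.tsum_fiberwise f).tsum_eq.symm.trans (tsum_fintype _)).symm

theorem le_pushforward_apply (hμ0 : ∀ w, 0 ≤ μ w) (hμ : Summable μ) (w : ι) :
    μ w ≤ pushforward μ f (f w) :=
  (hμ.subtype _).le_tsum (⟨w, rfl⟩ : {v // f v = f w}) fun v _ ↦ hμ0 v

theorem tsum_subtype_le_sum_pushforward (hμ0 : ∀ w, 0 ≤ μ w) (hμ : Summable μ)
    {p : ι → Prop} {B : Finset G} (hpB : ∀ w, p w → f w ∈ B) :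
    ∑' w : {w // p w}, μ w ≤ ∑ x ∈ B, pushforward μ f x := calc
  ∑' w : {w // p w}, μ w ≤ ∑' w : ⋃ x ∈ B, f ⁻¹' {x}, μ w :=
    (hμ.subtype _).tsum_le_tsum_of_inj (fun w ↦ ⟨w, Set.mem_biUnion (hpB w w.2) rfl⟩)
      (fun ⦃_ _⦄ h ↦ Subtype.ext (Subtype.mk.inj h)) (fun _ _ ↦ hμ0 _) (fun _ ↦ le_rfl)
      (hμ.subtype _)
  _ = ∑ x ∈ B, pushforward μ f x :=
    Summable.tsum_finset_bUnion_disjoint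
      (fun _ _ _ _ hxy ↦ Set.disjoint_singleton.mpr hxy |>.preimage f)
      fun _ _ ↦ hμ.subtype _

end Pushforward

theorem sum_le_half_sum_abs_of_sum_eq_zero {G : Type*} [Fintype G] [DecidableEq G]
    {d : G → ℝ} (hd : ∑ x, d x = 0) (B : Finset G) :
    ∑ x ∈ B, d x ≤ 1 / 2 * ∑ x, |d x| := by
  have hcompl := sum_add_sum_compl B d
  have hB : ∑ x ∈ B, d x ≤ ∑ x ∈ B, |d x| := sum_le_sum fun x _ ↦ le_abs_self (d x)
  have hBc : -∑ x ∈ Bᶜ, d x ≤ ∑ x ∈ Bᶜ, |d x| := by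
    rw [← sum_neg_distrib]; exact sum_le_sum fun x _ ↦ neg_le_abs (d x)
  rw [← sum_add_sum_compl B fun x ↦ |d x|]
  linarith

theorem tv_lower_bound_entropic_general {Ω : Type*} (μ : Ω → ℝ)
    (hμ0 : ∀ w, 0 ≤ μ w) (hμsum : Summable μ) (hμ1 : ∑' w, μ w = 1)
    {G : Type*} [Fintype G] (n : ℕ) (hn : 1 ≤ n) (hcard : Fintype.card G = n)
    (f : Ω → G) (ω : ℝ) :
    (1 / 2 : ℝ) * ∑ x : G, |(∑' w : {w : Ω // f w = x}, μ w.1) - 1 / (n : ℝ)| ≥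
      (∑' w : {w : Ω // Real.exp ω / (n : ℝ) ≤ μ w}, μ w.1) - Real.exp (-ω) := by
  classical
  set ν := pushforward μ f
  have hν1 : ∑ x, ν x = 1 := (sum_pushforward f hμsum).trans hμ1
  set B := univ.filter fun x ↦ Real.exp ω / n ≤ ν x
  have hμB : ∑' w : {w // Real.exp ω / n ≤ μ w}, μ w ≤ ∑ x ∈ B, ν x :=
    tsum_subtype_le_sum_pushforward f hμ0 hμsum fun w hw ↦
      mem_filter.mpr ⟨mem_univ _, hw.trans (le_pushforward_apply f hμ0 hμsum w)⟩
  have hBmass : #B * (Real.exp ω / n) ≤ 1 := calc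
    #B * (Real.exp ω / n) ≤ ∑ x ∈ B, ν x := by
      simpa using card_nsmul_le_sum B ν _ fun x hx ↦ (mem_filter.mp hx).2
    _ ≤ ∑ x, ν x := sum_le_sum_of_subset_of_nonneg (subset_univ B) fun x _ _ ↦
      tsum_nonneg fun w ↦ hμ0 w
    _ = 1 := hν1
  have hBcard : (#B : ℝ) / n ≤ Real.exp (-ω) := calc
    (#B : ℝ) / n = #B * (Real.exp ω / n) * Real.exp (-ω) := by
      rw [Real.exp_neg]; field_simp
    _ ≤ 1 * Real.exp (-ω) := by gcongr
    _ = Real.exp (-ω) := one_mul _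
  have hd : ∑ x, (ν x - 1 / (n : ℝ)) = 0 := by
    have hn0 : (n : ℝ) ≠ 0 := by positivity
    rw [sum_sub_distrib, hν1, sum_const, card_univ, hcard, nsmul_eq_mul]
    field_simp; ring
  calc (∑' w : {w // Real.exp ω / n ≤ μ w}, μ w) - Real.exp (-ω)
      ≤ ∑ x ∈ B, ν x - #B / n := by linarith
    _ = ∑ x ∈ B, (ν x - 1 / n) := by rw [sum_sub_distrib, sum_const, nsmul_eq_mul]; ring
    _ ≤ 1 / 2 * ∑ x, |ν x - 1 / n| := sum_le_half_sum_abs_of_sum_eq_zero hd B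

/-- Entropic lower bound on total variation distance: for a probability mass
function `μ` on a countable type `Ω`, a finite type `G` of cardinality `n`,
and any `f : Ω → G`, the total variation distance between the pushforward of
`μ` under `f` and the uniform distribution on `G` is at least
`μ {w | μ w ≥ e^ω / n} - e^{-ω}`. -/
theorem tv_lower_bound_entropic {Ω : Type*} [Countable Ω] (μ : Ω → ℝ)
    (hμ0 : ∀ w, 0 ≤ μ w) (hμsum : Summable μ) (hμ1 : ∑' w, μ w = 1)
    {G : Type*} [Fintype G] (n : ℕ) (hn : 1 ≤ n) (hcard : Fintype.card G = n)
    (f : Ω → G) (ω : ℝ) (hω : 0 < ω) :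
    (1 / 2 : ℝ) * ∑ x : G, |(∑' w : {w : Ω // f w = x}, μ w.1) - 1 / (n : ℝ)| ≥
      (∑' w : {w : Ω // Real.exp ω / (n : ℝ) ≤ μ w}, μ w.1) - Real.exp (-ω) :=
  tv_lower_bound_entropic_general μ hμ0 hμsum hμ1 n hn hcard f ω
end

section
/- Let n ≥ 1 and k ≥ 1 be integers and a : Fin k → ℤ. Let g = gcd(n, gcd_{i} a_i) (the greatest common divisor of n and all the a_i, as a natural number). If X_1, …, X_k are independent and each uniformly distributed on ZMod n, then the distribution of Σ_{i=1}^k a_i • X_i is the uniform distribution on the subgroup {x ∈ ZMod n : (g : ZMod n) ∣ x}; equivalently, the pushforward of the uniform distribution on (ZMod n)^k under w ↦ Σ_i a_i • w_i is the uniform distribution on the set of multiples of g in ZMod n. -/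
open scoped Classical

/-!
The map `w ↦ ∑ i, a i • w i` is a group homomorphism `(ZMod n)^k → ZMod n`, so all its nonempty
fibres are cosets of the kernel and have the same size: the pushforward of the uniform
distribution is uniform on the image. The image is the ideal of `ZMod n` generated by the `a i`;
since `n = 0` there, Bézout for `n` and `gcd_i a_i` shows that it is generated by `g`.
-/

open Finset

section UniformPushforward

variable {G H : Type*} [AddGroup G] [Fintype G] [AddMonoid H] [DecidableEq H]

theorem AddMonoidHom.card_fiber_mul_card_range (φ : G →+ H) {s : Finset H}
    (hs : ∀ y, y ∈ s ↔ y ∈ Set.range φ) {y : H} (hy : y ∈ s) :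
    #{x | φ x = y} * #s = Fintype.card G := by
  have hfib : ∀ z ∈ s, #{x | φ x = z} = #{x | φ x = y} := fun z hz =>
    AddMonoidHom.card_fiber_eq_of_mem_range φ ((hs z).1 hz) ((hs y).1 hy)
  have hmaps : Set.MapsTo φ (univ : Finset G) s := fun x _ => (hs (φ x)).2 (Set.mem_range_self x)
  rw [← card_univ, card_eq_sum_card_fiberwise hmaps, sum_congr rfl hfib, sum_const, smul_eq_mul,
    mul_comm]

theorem PMF.map_uniformOfFintype_addMonoidHom (φ : G →+ H) {s : Finset H}
    (hs : ∀ y, y ∈ s ↔ y ∈ Set.range φ) (hne : s.Nonempty) :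
    (PMF.uniformOfFintype G).map φ = PMF.uniformOfFinset s hne := by
  ext y
  rw [PMF.map_apply, tsum_fintype, PMF.uniformOfFinset_apply]
  simp only [PMF.uniformOfFintype_apply]
  rw [← sum_filter, sum_const, nsmul_eq_mul]
  simp only [eq_comm (a := y)]
  split_ifs with hy
  · have hfib : (#{x | φ x = y} : ENNReal) ≠ 0 := by
      obtain ⟨x, rfl⟩ := (hs y).1 hy
      exact Nat.cast_ne_zero.2 (card_ne_zero.2 ⟨x, by simp⟩)
    rw [← φ.card_fiber_mul_card_range hs hy, Nat.cast_mul,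
      ENNReal.mul_inv (.inl hfib) (.inl (ENNReal.natCast_ne_top _)), ← mul_assoc,
      ENNReal.mul_inv_cancel hfib (ENNReal.natCast_ne_top _), one_mul]
  · have hempty : ({x | φ x = y} : Finset G) = ∅ :=
      filter_false_of_mem fun x _ hx => hy ((hs y).2 ⟨x, hx⟩)
    simp [hempty]

end UniformPushforward

theorem Int.natCast_finset_gcd_natAbs {ι : Type*} (s : Finset ι) (a : ι → ℤ) :
    ((s.gcd fun i => (a i).natAbs : ℕ) : ℤ) = s.gcd a := by
  induction s using Finset.induction with
  | empty => simp
  | insert j s hj ih =>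
    rw [gcd_insert, gcd_insert, ← ih, ← Int.coe_gcd]
    simp [Int.gcd, gcd_eq_nat_gcd]

namespace ZMod

variable {ι : Type*} [Fintype ι] {n : ℕ}

theorem natCast_gcd_dvd_intCast (a : ι → ℤ) (i : ι) :
    ((Nat.gcd n (univ.gcd fun i => (a i).natAbs) : ℕ) : ZMod n) ∣ (a i : ZMod n) := by
  have h : ((Nat.gcd n (univ.gcd fun i => (a i).natAbs) : ℕ) : ℤ) ∣ a i :=
    Int.natCast_dvd.2 ((Nat.gcd_dvd_right _ _).trans (gcd_dvd (mem_univ i)))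
  simpa using map_dvd (Int.castRingHom (ZMod n)) h

theorem exists_natCast_gcd_eq_sum_mul (a : ι → ℤ) :
    ∃ c : ι → ZMod n,
      ((Nat.gcd n (univ.gcd fun i => (a i).natAbs) : ℕ) : ZMod n) = ∑ i, (a i : ZMod n) * c i := by
  obtain ⟨c, hc⟩ := univ.gcd_eq_sum_mul a
  set d := univ.gcd fun i => (a i).natAbs
  have hbez : ((Nat.gcd n d : ℕ) : ZMod n) = (d : ZMod n) * (Nat.gcdB n d : ZMod n) := by
    have := congrArg (Int.cast : ℤ → ZMod n) (Nat.gcd_eq_gcd_ab n d)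
    push_cast [ZMod.natCast_self] at this
    simpa using this
  refine ⟨fun i => (c i : ZMod n) * (Nat.gcdB n d : ZMod n), ?_⟩
  have hd : ((d : ℤ) : ZMod n) = ∑ i, (a i : ZMod n) * c i := by
    rw [Int.natCast_finset_gcd_natAbs, hc, Int.cast_sum]
    simp only [Int.cast_mul]
  rw [hbez, ← Int.cast_natCast, hd, sum_mul]
  simp only [mul_assoc]

theorem exists_sum_zsmul_eq_iff (a : ι → ℤ) (y : ZMod n) :
    (∃ w : ι → ZMod n, ∑ i, a i • w i = y) ↔
      ((Nat.gcd n (univ.gcd fun i => (a i).natAbs) : ℕ) : ZMod n) ∣ y := by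
  simp only [zsmul_eq_mul]
  constructor
  · rintro ⟨w, rfl⟩
    exact dvd_sum fun i _ => (natCast_gcd_dvd_intCast a i).mul_right _
  · rintro ⟨t, rfl⟩
    obtain ⟨c, hc⟩ := exists_natCast_gcd_eq_sum_mul (n := n) a
    exact ⟨fun i => c i * t, by rw [hc, sum_mul]; simp only [mul_assoc]⟩

end ZMod

theorem sum_smul_uniform_eq_uniform_multiples_gcd_general (n k : ℕ) [NeZero n]
    (a : Fin k → ℤ) (g : ℕ)
    (hg : g = Nat.gcd n (Finset.univ.gcd fun i => (a i).natAbs)) :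
    (PMF.uniformOfFintype (Fin k → ZMod n)).map (fun w => ∑ i, a i • w i) =
      PMF.uniformOfFinset
        (Finset.univ.filter fun x : ZMod n => (g : ZMod n) ∣ x)
        ⟨0, Finset.mem_filter.mpr ⟨Finset.mem_univ 0, dvd_zero _⟩⟩ := by
  let φ : (Fin k → ZMod n) →+ ZMod n :=
    ∑ i, (DistribSMul.toAddMonoidHom (ZMod n) (a i)).comp
      (Pi.evalAddMonoidHom (fun _ => ZMod n) i)
  have hφ : ⇑φ = fun w => ∑ i, a i • w i := by
    ext w; simp [φ]
  rw [← hφ]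
  refine PMF.map_uniformOfFintype_addMonoidHom φ (fun y => ?_) _
  rw [mem_filter, hφ, hg, ← ZMod.exists_sum_zsmul_eq_iff]
  simp [Set.mem_range]

/-- If `X_1, …, X_k` are independent uniform elements of `ZMod n` (equivalently,
the random vector is uniform on `(ZMod n)^k`), then `∑ i, a i • X i` is uniform
on the set of multiples of `g = gcd(n, gcd_i a_i)` in `ZMod n`. -/
theorem sum_smul_uniform_eq_uniform_multiples_gcd (n k : ℕ) [NeZero n] (hk : 1 ≤ k)
    (a : Fin k → ℤ) (g : ℕ)
    (hg : g = Nat.gcd n (Finset.univ.gcd fun i => (a i).natAbs)) :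
    (PMF.uniformOfFintype (Fin k → ZMod n)).map (fun w => ∑ i, a i • w i) =
      PMF.uniformOfFinset
        (Finset.univ.filter fun x : ZMod n => (g : ZMod n) ∣ x)
        ⟨0, Finset.mem_filter.mpr ⟨Finset.mem_univ 0, dvd_zero _⟩⟩ :=
  sum_smul_uniform_eq_uniform_multiples_gcd_general n k a g hg
end

section
/- Let d ≥ 1, let m : Fin d → ℕ with m_j ≥ 1 for all j, and let G = Π_{j} ZMod (m_j). Let k ≥ 1 and v : Fin k → ℤ, and for each j set g_j = gcd(m_j, gcd_i v_i) (a natural number; by convention gcd of integers taken as a natural number, and gcd(0, m) = m). If Z_1, …, Z_k are independent and each uniformly distributed on G, then the distribution of Σ_{i=1}^k v_i • Z_i is the uniform distribution on the subgroup H = {z ∈ G : for every j, (g_j : ZMod m_j) divides z_j}. -/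
/-!
The map `Z ↦ ∑ i, v i • Z i` is an additive homomorphism `G^k → G`, so all its nonempty fibres
are cosets of the kernel and have the same size: the pushforward of the uniform law is uniform on
the range. Coordinatewise, by Bézout the range in `ZMod m` is the set of multiples of
`gcd_i v_i`, and in `ZMod m` these are the multiples of `gcd (m, gcd_i v_i)`.
-/

open Finset

theorem Finset.natCast_gcd_natAbs {ι : Type*} (s : Finset ι) (f : ι → ℤ) :
    ((s.gcd fun i => (f i).natAbs : ℕ) : ℤ) = s.gcd f := by
  classical
  induction s using Finset.induction_on with
  | empty => simp
  | insert a s ha ih =>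
    rw [gcd_insert, gcd_insert, ← ih, ← Int.coe_gcd, Int.gcd_def, Int.natAbs_natCast]
    rfl

theorem ZMod.natCast_gcd_dvd_iff (n a : ℕ) (z : ZMod n) :
    ((n.gcd a : ℕ) : ZMod n) ∣ z ↔ (a : ZMod n) ∣ z := by
  have hgcd : ((n.gcd a : ℕ) : ZMod n) = a * (n.gcdB a : ZMod n) := by
    have := congrArg (Int.cast : ℤ → ZMod n) (Nat.gcd_eq_gcd_ab n a)
    push_cast at this
    rw [this, ZMod.natCast_self, zero_mul, zero_add]
  refine ⟨fun h => ?_, (Nat.cast_dvd_cast (Nat.gcd_dvd_right n a)).trans⟩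
  exact (Dvd.intro _ hgcd.symm).trans h

theorem exists_sum_zsmul_eq_iff_dvd {ι R : Type*} [Fintype ι] [CommRing R] (v : ι → ℤ) (z : R) :
    (∃ x : ι → R, ∑ i, v i • x i = z) ↔ ((univ.gcd fun i => (v i).natAbs : ℕ) : R) ∣ z := by
  have hG : ((univ.gcd fun i => (v i).natAbs : ℕ) : R) = ((univ.gcd v : ℤ) : R) := by
    rw [← univ.natCast_gcd_natAbs v, Int.cast_natCast]
  rw [hG]
  constructor
  · rintro ⟨x, rfl⟩
    refine dvd_sum fun i _ => ?_
    rw [zsmul_eq_mul]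
    exact (Int.cast_dvd_cast _ _ (gcd_dvd (mem_univ i))).mul_right _
  · rintro ⟨t, rfl⟩
    obtain ⟨c, hc⟩ := univ.gcd_eq_sum_mul v
    refine ⟨fun i => c i * t, ?_⟩
    simp only [hc, zsmul_eq_mul, Int.cast_sum, Int.cast_mul, sum_mul, mul_assoc]

theorem exists_sum_zsmul_eq_pi_iff {ι κ : Type*} [Fintype ι] {M : κ → Type*}
    [∀ j, AddCommGroup (M j)] (v : ι → ℤ) (z : ∀ j, M j) :
    (∃ Z : ι → ∀ j, M j, ∑ i, v i • Z i = z) ↔ ∀ j, ∃ x : ι → M j, ∑ i, v i • x i = z j := by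
  simp only [funext_iff, Finset.sum_apply, Pi.smul_apply]
  constructor
  · rintro ⟨Z, hZ⟩ j
    exact ⟨fun i => Z i j, hZ j⟩
  · intro h
    choose x hx using h
    exact ⟨fun i j => x j i, hx⟩

theorem PMF.map_uniformOfFintype_addMonoidHom_s2 {G H : Type*} [AddGroup G] [Fintype G]
    [AddMonoid H] [DecidableEq H] (f : G →+ H) (s : Finset H) (hs : s.Nonempty)
    (hsf : ∀ y, y ∈ s ↔ y ∈ Set.range f) :
    (uniformOfFintype G).map f = uniformOfFinset s hs := by
  set K := #{a | f a = 0}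
  have hfiber : ∀ y ∈ s, #{a | f a = y} = K := fun y hy =>
    AddMonoidHom.card_fiber_eq_of_mem_range f ((hsf y).1 hy) ⟨0, map_zero f⟩
  have hcard : Fintype.card G = #s * K := by
    rw [← card_univ, card_eq_sum_card_fiberwise (fun a _ => (hsf (f a)).2 ⟨a, rfl⟩),
      sum_congr rfl hfiber, sum_const, smul_eq_mul]
  have hK : (K : ENNReal) ≠ 0 := Nat.cast_ne_zero.2 (card_ne_zero.2 ⟨0, by simp⟩)
  ext y
  rw [map_apply, tsum_fintype, uniformOfFinset_apply]
  simp only [uniformOfFintype_apply]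
  rw [← sum_filter, sum_const, nsmul_eq_mul]
  split_ifs with hy
  · rw [filter_congr (fun a _ => eq_comm), hfiber y hy, hcard, Nat.cast_mul,
      ENNReal.mul_inv (by simp) (by simp), mul_left_comm,
      ENNReal.mul_inv_cancel hK (ENNReal.natCast_ne_top K), mul_one]
  · rw [filter_false_of_mem fun a _ hya => hy ((hsf y).2 ⟨a, hya.symm⟩), card_empty, Nat.cast_zero,
      zero_mul]

open scoped Classical in
theorem sum_smul_uniform_eq_uniform_subgroup_general (d : ℕ)
    (m : Fin d → ℕ) [∀ j, NeZero (m j)]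
    (k : ℕ) (v : Fin k → ℤ) (g : Fin d → ℕ)
    (hg : ∀ j, g j = Nat.gcd (m j) (Finset.univ.gcd fun i => (v i).natAbs)) :
    (PMF.uniformOfFintype (Fin k → ∀ j, ZMod (m j))).map (fun Z => ∑ i, v i • Z i) =
      PMF.uniformOfFinset
        (Finset.univ.filter fun z : ∀ j, ZMod (m j) => ∀ j, (g j : ZMod (m j)) ∣ z j)
        ⟨0, Finset.mem_filter.mpr ⟨Finset.mem_univ 0, fun j => dvd_zero _⟩⟩ := by
  let F : (Fin k → ∀ j, ZMod (m j)) →+ ∀ j, ZMod (m j) :=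
    AddMonoidHom.mk' (fun Z => ∑ i, v i • Z i) fun Y Z => by
      simp only [Pi.add_apply, smul_add, sum_add_distrib]
  refine PMF.map_uniformOfFintype_addMonoidHom_s2 F _ _ fun z => ?_
  rw [mem_filter, Set.mem_range]
  simp only [mem_univ, true_and, F, AddMonoidHom.mk'_apply, exists_sum_zsmul_eq_pi_iff]
  refine forall_congr' fun j => ?_
  rw [exists_sum_zsmul_eq_iff_dvd, hg j, ZMod.natCast_gcd_dvd_iff]

/-- Key lemma on random inner products in a product of cyclic groups: if
`Z_1, …, Z_k` are independent uniform on `G = Π_j ZMod (m j)` (equivalently,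
the random vector is uniform on `G^k`), then `∑ i, v i • Z i` is uniform on
the subgroup `H = {z | ∀ j, (g j : ZMod (m j)) ∣ z j}` where
`g j = gcd (m j) (gcd_i v_i)`. -/
theorem sum_smul_uniform_eq_uniform_subgroup (d : ℕ) (hd : 1 ≤ d)
    (m : Fin d → ℕ) (hm : ∀ j, 1 ≤ m j) [∀ j, NeZero (m j)]
    (k : ℕ) (hk : 1 ≤ k) (v : Fin k → ℤ) (g : Fin d → ℕ)
    (hg : ∀ j, g j = Nat.gcd (m j) (Finset.univ.gcd fun i => (v i).natAbs)) :
    (PMF.uniformOfFintype (Fin k → ∀ j, ZMod (m j))).map (fun Z => ∑ i, v i • Z i) =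
      PMF.uniformOfFinset
        (Finset.univ.filter fun z : ∀ j, ZMod (m j) => ∀ j, (g j : ZMod (m j)) ∣ z j)
        ⟨0, Finset.mem_filter.mpr ⟨Finset.mem_univ 0, fun j => dvd_zero _⟩⟩ :=
  sum_smul_uniform_eq_uniform_subgroup_general d m k v g hg
end

section
/- For every real θ ∈ [−1/2, 1/2] the following chain of inequalities holds: 2(πθ)^2 ≥ 1 − cos(2πθ) ≥ 2·exp(−7π²θ²/18)·(πθ)² ≥ (2/3)·(πθ)². -/
/-!
The upper bound is `1 - y²/2 ≤ cos y`. For the middle bound, the alternating Taylor bounds for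
`sin` and `cos` on `[0, ∞)` follow from one another by integrating from `0`, since each remainder
is the derivative of the next one. The degree-8 bound gives `1 - cos 2x ≥ 2x² P(x²)` with
`P(u) = 1 - u/3 + 2u²/45 - u³/315`, and on `u ≤ π²/4 < 5/2` the cubic partial sum of the exponential
already gives `P(u) exp(7u/18) ≥ 1`. The last bound is `7u/18 < 1 < log 3`.
-/

open Real Finset Nat

noncomputable section

def sinTaylor (n : ℕ) (t : ℝ) : ℝ := ∑ k ∈ range n, (-1) ^ k * t ^ (2 * k + 1) / (2 * k + 1)!

def cosTaylor (n : ℕ) (t : ℝ) : ℝ := ∑ k ∈ range n, (-1) ^ k * t ^ (2 * k) / (2 * k)!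

end

lemma nonneg_of_hasDerivAt_nonneg {f f' : ℝ → ℝ} (hf : ∀ t, HasDerivAt f (f' t) t)
    (h₀ : f 0 = 0) (hf' : ∀ t, 0 < t → 0 ≤ f' t) {t : ℝ} (ht : 0 ≤ t) : 0 ≤ f t := by
  have hmono : MonotoneOn f (Set.Ici 0) := by
    refine monotoneOn_of_hasDerivWithinAt_nonneg (convex_Ici 0)
      (fun x _ ↦ (hf x).continuousAt.continuousWithinAt) (fun x _ ↦ (hf x).hasDerivWithinAt) ?_
    rw [interior_Ici]
    exact hf'
  simpa [h₀] using hmono Set.self_mem_Ici ht ht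

lemma hasDerivAt_sinTaylor (n : ℕ) (t : ℝ) : HasDerivAt (sinTaylor n) (cosTaylor n t) t := by
  unfold sinTaylor cosTaylor
  refine HasDerivAt.fun_sum fun k _ ↦ ?_
  refine (((hasDerivAt_pow (2 * k + 1) t).const_mul ((-1 : ℝ) ^ k)).div_const
    ((2 * k + 1)! : ℝ)).congr_deriv ?_
  rw [Nat.factorial_succ]
  push_cast
  field_simp

lemma hasDerivAt_cosTaylor_succ (n : ℕ) (t : ℝ) :
    HasDerivAt (cosTaylor (n + 1)) (-sinTaylor n t) t := by
  have hcos : cosTaylor (n + 1) =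
      fun t ↦ 1 + ∑ k ∈ range n, (-1 : ℝ) ^ (k + 1) * t ^ (2 * k + 2) / (2 * k + 2)! := by
    funext t
    simp [cosTaylor, sum_range_succ', add_comm, mul_add]
  rw [hcos, sinTaylor, ← sum_neg_distrib, ← zero_add (∑ _ ∈ _, _)]
  refine (hasDerivAt_const t 1).add (HasDerivAt.fun_sum fun k _ ↦ ?_)
  refine (((hasDerivAt_pow (2 * k + 2) t).const_mul ((-1 : ℝ) ^ (k + 1))).div_const
    ((2 * k + 2)! : ℝ)).congr_deriv ?_
  rw [Nat.factorial_succ]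
  push_cast
  field_simp
  ring

lemma sin_sub_sinTaylor_alternating {n : ℕ}
    (hcos : ∀ t, 0 ≤ t → 0 ≤ (-1) ^ n * (cos t - cosTaylor n t)) {t : ℝ} (ht : 0 ≤ t) :
    0 ≤ (-1) ^ n * (sin t - sinTaylor n t) :=
  nonneg_of_hasDerivAt_nonneg
    (fun t ↦ ((hasDerivAt_sin t).sub (hasDerivAt_sinTaylor n t)).const_mul _)
    (by simp [sinTaylor]) (fun t ht ↦ hcos t ht.le) ht

lemma cos_sub_cosTaylor_succ_alternating {n : ℕ}
    (hsin : ∀ t, 0 ≤ t → 0 ≤ (-1) ^ n * (sin t - sinTaylor n t)) {t : ℝ} (ht : 0 ≤ t) :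
    0 ≤ (-1) ^ (n + 1) * (cos t - cosTaylor (n + 1) t) := by
  refine nonneg_of_hasDerivAt_nonneg
    (fun t ↦ ((hasDerivAt_cos t).sub (hasDerivAt_cosTaylor_succ n t)).const_mul _)
    (by simp [cosTaylor, sum_range_succ']) (fun t ht ↦ ?_) ht
  convert hsin t ht.le using 1
  ring

theorem cos_sub_cosTaylor_alternating (n : ℕ) {t : ℝ} (ht : 0 ≤ t) :
    0 ≤ (-1) ^ (n + 1) * (cos t - cosTaylor (n + 1) t) := by
  induction n generalizing t with
  | zero => simpa [cosTaylor] using cos_le_one t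
  | succ n ih =>
    exact cos_sub_cosTaylor_succ_alternating
      (fun _ hs ↦ sin_sub_sinTaylor_alternating (fun _ ↦ ih) hs) ht

lemma cosTaylor_abs (n : ℕ) (t : ℝ) : cosTaylor n |t| = cosTaylor n t := by
  simp only [cosTaylor, pow_mul, sq_abs]

theorem cos_le_cosTaylor (n : ℕ) (t : ℝ) : cos t ≤ cosTaylor (2 * n + 1) t := by
  have h := cos_sub_cosTaylor_alternating (2 * n) (abs_nonneg t)
  rw [cos_abs, cosTaylor_abs, pow_succ, pow_mul] at h
  simpa using h

lemma two_mul_sq_mul_le_one_sub_cos_two_mul (x : ℝ) :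
    2 * x ^ 2 * (1 - x ^ 2 / 3 + 2 * x ^ 4 / 45 - x ^ 6 / 315) ≤ 1 - cos (2 * x) := by
  have hcos : cosTaylor 5 (2 * x) =
      1 - 2 * x ^ 2 + 2 * x ^ 4 / 3 - 4 * x ^ 6 / 45 + 2 * x ^ 8 / 315 := by
    norm_num [cosTaylor, sum_range_succ, Nat.factorial]
    ring
  linarith [cos_le_cosTaylor 2 (2 * x)]

lemma exp_neg_seven_mul_div_eighteen_le {u : ℝ} (hu₀ : 0 ≤ u) (hu : u ≤ 5 / 2) :
    exp (-(7 * u / 18)) ≤ 1 - u / 3 + 2 * u ^ 2 / 45 - u ^ 3 / 315 := by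
  set a := 7 * u / 18 with ha
  have hexp : 1 + a + a ^ 2 / 2 + a ^ 3 / 6 ≤ exp a := by
    simpa [sum_range_succ, Nat.factorial] using sum_le_exp_of_nonneg (by positivity : 0 ≤ a) 4
  -- `P(u) (1 + a + a²/2 + a³/6) - 1 = u R(u)`, and for `u ≤ 5/2` the negative terms of `R`
  -- stay below `1/18`.
  have hR : 0 ≤ 1 / 18 - 31 * u / 3240 - 317 * u ^ 2 / 244944 - 599 * u ^ 3 / 524880
      + 77 * u ^ 4 / 393660 - 49 * u ^ 5 / 1574640 := by
    nlinarith [pow_le_pow_left₀ hu₀ hu 2, pow_le_pow_left₀ hu₀ hu 3,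
      pow_le_pow_left₀ hu₀ hu 5, pow_nonneg hu₀ 4]
  have hP : 0 ≤ 1 - u / 3 + 2 * u ^ 2 / 45 - u ^ 3 / 315 := by
    nlinarith [pow_le_pow_left₀ hu₀ hu 3, pow_nonneg hu₀ 2]
  rw [exp_neg, inv_le_iff_one_le_mul₀ (exp_pos a)]
  calc 1 ≤ (1 - u / 3 + 2 * u ^ 2 / 45 - u ^ 3 / 315) * (1 + a + a ^ 2 / 2 + a ^ 3 / 6) := by
        rw [ha]; linear_combination mul_nonneg hu₀ hR
    _ ≤ _ := mul_le_mul_of_nonneg_left hexp hP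

lemma inv_three_le_exp_neg {a : ℝ} (ha : a ≤ 1) : 3⁻¹ ≤ exp (-a) := by
  rw [exp_neg]
  exact inv_anti₀ (exp_pos a) ((exp_le_exp.2 ha).trans exp_one_lt_three.le)

theorem one_sub_cos_two_mul_bounds {x : ℝ} (hx : x ^ 2 ≤ 5 / 2) :
    2 * x ^ 2 ≥ 1 - cos (2 * x) ∧
      1 - cos (2 * x) ≥ 2 * exp (-(7 * x ^ 2 / 18)) * x ^ 2 ∧
      2 * exp (-(7 * x ^ 2 / 18)) * x ^ 2 ≥ (2 / 3) * x ^ 2 := by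
  have hsq : 0 ≤ x ^ 2 := sq_nonneg x
  refine ⟨?_, ?_, ?_⟩
  · linarith [one_sub_sq_div_two_le_cos (x := 2 * x)]
  · nlinarith [two_mul_sq_mul_le_one_sub_cos_two_mul x, exp_neg_seven_mul_div_eighteen_le hsq hx]
  · nlinarith [inv_three_le_exp_neg (a := 7 * x ^ 2 / 18) (by linarith)]

/-- Explicit quantitative two-sided Taylor-type bound for `1 - cos` on `[-π, π]`:
for `θ ∈ [-1/2, 1/2]`,
`2(πθ)² ≥ 1 - cos(2πθ) ≥ 2·exp(-7π²θ²/18)·(πθ)² ≥ (2/3)(πθ)²`. -/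
theorem one_sub_cos_two_pi_bounds (θ : ℝ) (h1 : -(1/2) ≤ θ) (h2 : θ ≤ 1/2) :
    2 * (π * θ)^2 ≥ 1 - Real.cos (2 * π * θ) ∧
      1 - Real.cos (2 * π * θ) ≥ 2 * Real.exp (-(7 * π^2 * θ^2) / 18) * (π * θ)^2 ∧
      2 * Real.exp (-(7 * π^2 * θ^2) / 18) * (π * θ)^2 ≥ (2/3) * (π * θ)^2 := by
  have hπ : π ^ 2 ≤ 10 := by nlinarith [pi_lt_d2, pi_pos]
  have hθ : θ ^ 2 ≤ 1 / 4 := by nlinarith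
  have hx : (π * θ) ^ 2 ≤ 5 / 2 := by
    rw [mul_pow]
    nlinarith [sq_nonneg π, sq_nonneg θ]
  rw [show 2 * π * θ = 2 * (π * θ) by ring,
    show -(7 * π ^ 2 * θ ^ 2) / 18 = -(7 * (π * θ) ^ 2 / 18) by ring]
  exact one_sub_cos_two_mul_bounds hx
end

section
/- Let d ≥ 1, m : Fin d → ℕ with m_j ≥ 1, G = Π_j ZMod (m_j), k ≥ 1, and Z : Fin k → G. Define P : Matrix G G ℝ by P(g, h) = (1/(2k))·( #{i : Z_i = h − g} + #{i : Z_i = g − h} ). For x ∈ G define f_x : G → ℝ by f_x(y) = cos( 2π·Σ_j x_j·y_j / m_j ), where x_j, y_j ∈ {0, …, m_j − 1} are integer representatives of the coordinates, and define λ_x = (1/k)·Σ_{i=1}^k cos( 2π·Σ_j x_j·(Z_i)_j / m_j ). Then for every x ∈ G, P.mulVec f_x = λ_x • f_x. -/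
open Real
open scoped Classical

/-!
The phase `y ↦ 2π ∑ⱼ xⱼ yⱼ / mⱼ` is additive modulo `2π`, i.e. it is an additive homomorphism
`φ : G →+ Real.Angle`. For any such `φ` the identity `cos (θ + ψ) + cos (θ - ψ) = 2 cos θ cos ψ`
turns `∑ᵢ (cos φ(y + Zᵢ) + cos φ(y - Zᵢ))`, which is the Cayley multigraph's adjacency matrix
applied to `cos ∘ φ` at `y`, into `2 cos φ(y) ∑ᵢ cos φ(Zᵢ)`.
-/

lemma Real.Angle.cos_add_add_cos_sub (θ ψ : Real.Angle) :
    (θ + ψ).cos + (θ - ψ).cos = 2 * θ.cos * ψ.cos := by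
  induction θ using Real.Angle.induction_on
  induction ψ using Real.Angle.induction_on
  simp only [← Real.Angle.coe_add, ← Real.Angle.coe_sub, Real.Angle.cos_coe, Real.cos_add,
    Real.cos_sub]
  ring

/-- `j ↦ 2πj/N`, built from integer representatives so that additivity is immediate. -/
noncomputable def ZMod.toAngle {N : ℕ} : ZMod N →+ Real.Angle :=
  ZMod.lift N ⟨Real.Angle.coeHom.comp ((AddMonoidHom.mulLeft (2 * π / N)).comp (Int.castAddHom ℝ)), by
    rcases eq_or_ne N 0 with rfl | hN
    · simp
    · simp [div_mul_cancel₀ (2 * π) (Nat.cast_ne_zero.2 hN : (N : ℝ) ≠ 0)]⟩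

lemma ZMod.toAngle_apply {N : ℕ} [NeZero N] (j : ZMod N) :
    toAngle j = ((2 * π * j.val / N : ℝ) : Real.Angle) := by
  conv_lhs => rw [← natCast_zmod_val j, ← Int.cast_natCast, toAngle, lift_coe]
  change ((2 * π / N * ((j.val : ℤ) : ℝ) : ℝ) : Real.Angle) = _
  push_cast
  congr 1
  ring

section TorusPhase

variable {ι : Type*} [Fintype ι] {m : ι → ℕ} [∀ j, NeZero (m j)]

noncomputable def torusPhase (x : ∀ j, ZMod (m j)) : (∀ j, ZMod (m j)) →+ Real.Angle :=
  ∑ j, (x j).val • ZMod.toAngle.comp (Pi.evalAddMonoidHom (fun j => ZMod (m j)) j)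

lemma torusPhase_apply (x y : ∀ j, ZMod (m j)) :
    torusPhase x y = ((2 * π * ∑ j, ((x j).val : ℝ) * (y j).val / m j : ℝ) : Real.Angle) := by
  simp only [torusPhase, AddMonoidHom.finsetSum_apply, AddMonoidHom.nsmul_apply,
    AddMonoidHom.coe_comp, Function.comp_apply, Pi.evalAddMonoidHom_apply, ZMod.toAngle_apply,
    Finset.mul_sum, ← Real.Angle.natCast_mul_eq_nsmul]
  rw [← Real.Angle.coe_coeHom, ← map_sum]
  congr 1
  exact Finset.sum_congr rfl fun j _ => by ring

end TorusPhase

section CayleyMultigraph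

open Finset Matrix

variable {G ι : Type*} [AddCommGroup G] [Fintype G] [DecidableEq G] [Fintype ι]

def cayleyAdjMatrix (Z : ι → G) : Matrix G G ℝ := fun g h =>
  (#{i | Z i = h - g} : ℝ) + #{i | Z i = g - h}

omit [AddCommGroup G] in
lemma sum_card_fiber_mul (g : ι → G) (f : G → ℝ) :
    ∑ h, (#{i | g i = h} : ℝ) * f h = ∑ i, f (g i) := by
  simp only [← sum_fiberwise' univ g f, sum_const, nsmul_eq_mul]

theorem cayleyAdjMatrix_mulVec_apply (Z : ι → G) (f : G → ℝ) (y : G) :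
    (cayleyAdjMatrix Z *ᵥ f) y = ∑ i, (f (y + Z i) + f (y - Z i)) := by
  have hsub (h : G) (i : ι) : Z i = y - h ↔ y - Z i = h := by
    rw [sub_eq_iff_eq_add, eq_sub_iff_add_eq', eq_comm]
  simp only [mulVec, dotProduct, cayleyAdjMatrix, add_mul, sum_add_distrib,
    eq_sub_iff_add_eq', hsub, sum_card_fiber_mul]

theorem cayleyAdjMatrix_mulVec_cos_comp (Z : ι → G) (φ : G →+ Real.Angle) :
    cayleyAdjMatrix Z *ᵥ (fun y => (φ y).cos) = (2 * ∑ i, (φ (Z i)).cos) • fun y => (φ y).cos := by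
  funext y
  simp only [cayleyAdjMatrix_mulVec_apply, map_add, map_sub, Real.Angle.cos_add_add_cos_sub,
    Pi.smul_apply, smul_eq_mul, mul_sum, sum_mul]
  exact sum_congr rfl fun i _ => by ring

end CayleyMultigraph

theorem cayley_torus_eigenvectors_general (d : ℕ) (m : Fin d → ℕ)
    [∀ j, NeZero (m j)] (k : ℕ)
    (Z : Fin k → ∀ j, ZMod (m j)) :
    let P : Matrix (∀ j, ZMod (m j)) (∀ j, ZMod (m j)) ℝ := fun g h =>
      (1/(2*(k:ℝ))) * (((Finset.univ.filter fun i => Z i = h - g).card : ℝ) +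
        ((Finset.univ.filter fun i => Z i = g - h).card : ℝ))
    ∀ x : ∀ j, ZMod (m j),
      P.mulVec (fun y => Real.cos (2 * π * ∑ j, ((x j).val : ℝ) * ((y j).val : ℝ) / (m j))) =
        ((1/(k:ℝ)) * ∑ i, Real.cos (2 * π * ∑ j, ((x j).val : ℝ) * (((Z i) j).val : ℝ) / (m j))) •
          (fun y => Real.cos (2 * π * ∑ j, ((x j).val : ℝ) * ((y j).val : ℝ) / (m j))) := by
  intro P x
  have hP : P = (1 / (2 * (k : ℝ))) • cayleyAdjMatrix Z := rfl
  have hf : (fun y => Real.cos (2 * π * ∑ j, ((x j).val : ℝ) * ((y j).val : ℝ) / (m j))) =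
      fun y => (torusPhase x y).cos := by
    funext y
    rw [torusPhase_apply, Real.Angle.cos_coe]
  rw [hP, hf, Matrix.smul_mulVec, cayleyAdjMatrix_mulVec_cos_comp, smul_smul]
  simp only [torusPhase_apply, Real.Angle.cos_coe]
  congr 1
  ring

/-- Eigenstructure of the simple random walk on the Cayley multigraph of the
torus `G = Π_j ZMod (m j)` with generator tuple `Z`: for each `x ∈ G` the
cosine character `f_x(y) = cos(2π ∑_j x_j y_j / m_j)` is an eigenvector of the
transition matrix `P` with eigenvalue
`λ_x = (1/k)·∑ᵢ cos(2π ∑_j x_j (Zᵢ)_j / m_j)`. -/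
theorem cayley_torus_eigenvectors (d : ℕ) (hd : 1 ≤ d) (m : Fin d → ℕ)
    (hm : ∀ j, 1 ≤ m j) [∀ j, NeZero (m j)] (k : ℕ) (hk : 1 ≤ k)
    (Z : Fin k → ∀ j, ZMod (m j)) :
    let P : Matrix (∀ j, ZMod (m j)) (∀ j, ZMod (m j)) ℝ := fun g h =>
      (1/(2*(k:ℝ))) * (((Finset.univ.filter fun i => Z i = h - g).card : ℝ) +
        ((Finset.univ.filter fun i => Z i = g - h).card : ℝ))
    ∀ x : ∀ j, ZMod (m j),
      P.mulVec (fun y => Real.cos (2 * π * ∑ j, ((x j).val : ℝ) * ((y j).val : ℝ) / (m j))) =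
        ((1/(k:ℝ)) * ∑ i, Real.cos (2 * π * ∑ j, ((x j).val : ℝ) * (((Z i) j).val : ℝ) / (m j))) •
          (fun y => Real.cos (2 * π * ∑ j, ((x j).val : ℝ) * ((y j).val : ℝ) / (m j))) :=
  cayley_torus_eigenvectors_general d m k Z
end

section
/- Let ℓ ≥ 1 be an integer and θ = π/(2ℓ). Let J = {x ∈ ℤ : |x| ≤ ℓ − 1}, regarded as a finite index set, and let A : Matrix J J ℝ be given by A(x, y) = 1/2 if |x − y| = 1 and A(x, y) = 0 otherwise. For i ∈ ℕ set q_i = Σ_{y ∈ J} (A^i)(0, y). Then for every real s ≥ 0, Σ_{i=0}^∞ e^{−s}·s^i/i! · q_i ≥ exp( −(1 − cos θ)·s ). -/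
open Real Finset Matrix
open scoped Nat

/-!
With `θ = π / (2ℓ)` the vector `φ x = cos (θ x)` vanishes at `±ℓ`, so it is an eigenvector of the
killed walk `A` with eigenvalue `cos θ`. As `A ^ i ≥ 0` and `φ ≤ 1 = φ 0`, this gives
`q_i ≥ ∑ y, (A ^ i) 0 y * φ y = cos θ ^ i`, and the Poisson average of `cos θ ^ i` is exactly
`exp (-(1 - cos θ) s)`.
-/

namespace Matrix

variable {R n : Type*} [Fintype n] [DecidableEq n] [CommSemiring R]

theorem pow_mulVec_of_mulVec_eq_smul {M : Matrix n n R} {v : n → R} {c : R}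
    (hv : M *ᵥ v = c • v) (k : ℕ) : M ^ k *ᵥ v = c ^ k • v := by
  induction k with
  | zero => simp
  | succ k ih => rw [pow_succ, ← mulVec_mulVec, hv, mulVec_smul, ih, smul_smul, pow_succ']

variable [PartialOrder R] [IsOrderedRing R]

def subStochastic (R n : Type*) [Fintype n] [DecidableEq n] [CommSemiring R] [PartialOrder R]
    [IsOrderedRing R] : Submonoid (Matrix n n R) where
  carrier := {M | (∀ i j, 0 ≤ M i j) ∧ ∀ i, ∑ j, M i j ≤ 1}
  mul_mem' {M N} hM hN := by
    refine ⟨fun i j => sum_nonneg fun k _ => mul_nonneg (hM.1 _ _) (hN.1 _ _), fun i => ?_⟩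
    calc ∑ j, (M * N) i j = ∑ k, M i k * ∑ j, N k j := by
          simp only [mul_apply, mul_sum]; exact sum_comm
      _ ≤ ∑ k, M i k * 1 := sum_le_sum fun k _ => mul_le_mul_of_nonneg_left (hN.2 k) (hM.1 i k)
      _ ≤ 1 := by simpa using hM.2 i
  one_mem' := by
    refine ⟨fun i j => ?_, fun i => ?_⟩ <;> simp only [one_apply, sum_ite_eq, mem_univ, ite_true]
    · split <;> simp
    · rfl

theorem pow_mul_le_sum_pow_apply {M : Matrix n n R} (hM : ∀ i j, 0 ≤ M i j) {v : n → R} {c : R}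
    (hv : M *ᵥ v = c • v) (hv1 : ∀ j, v j ≤ 1) (k : ℕ) (i : n) :
    c ^ k * v i ≤ ∑ j, (M ^ k) i j :=
  calc c ^ k * v i = ∑ j, (M ^ k) i j * v j := by
        rw [← smul_eq_mul, ← Pi.smul_apply, ← pow_mulVec_of_mulVec_eq_smul hv]; rfl
    _ ≤ ∑ j, (M ^ k) i j := sum_le_sum fun j _ =>
        mul_le_of_le_one_right (pow_apply_nonneg hM k i j) (hv1 j)

end Matrix

theorem hasSum_poisson_mul_pow (s c : ℝ) :
    HasSum (fun i : ℕ => exp (-s) * s ^ i / i ! * c ^ i) (exp (-(1 - c) * s)) := by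
  have h : HasSum (fun i : ℕ => (s * c) ^ i / i !) (exp (s * c)) := by
    rw [Real.exp_eq_exp_ℝ]; exact NormedSpace.expSeries_div_hasSum_exp (s * c)
  rw [show -(1 - c) * s = -s + s * c by ring, exp_add]
  have hterm : (fun i : ℕ => exp (-s) * s ^ i / i ! * c ^ i) =
      fun i => exp (-s) * ((s * c) ^ i / i !) := funext fun i => by ring
  exact hterm ▸ h.mul_left (exp (-s))

theorem exp_neg_mul_le_tsum_poisson_mul {s c : ℝ} {q : ℕ → ℝ} (hs : 0 ≤ s)
    (hcq : ∀ i, c ^ i ≤ q i) (hq0 : ∀ i, 0 ≤ q i) (hq1 : ∀ i, q i ≤ 1) :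
    exp (-(1 - c) * s) ≤ ∑' i, exp (-s) * s ^ i / i ! * q i := by
  have hw : ∀ i, 0 ≤ exp (-s) * s ^ i / i ! := fun i => by positivity
  have hsum : Summable fun i => exp (-s) * s ^ i / i ! * q i :=
    (Real.summable_pow_div_factorial s |>.mul_left (exp (-s))).of_nonneg_of_le
      (fun i => mul_nonneg (hw i) (hq0 i))
      (fun i => by rw [← mul_div_assoc]; exact mul_le_of_le_one_right (hw i) (hq1 i))
  exact hasSum_le (fun i => mul_le_mul_of_nonneg_left (hcq i) (hw i))
    (hasSum_poisson_mul_pow s c) hsum.hasSum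

noncomputable def killedWalk (a b : ℤ) : Matrix (Icc a b) (Icc a b) ℝ :=
  fun x y => if |x.1 - y.1| = 1 then 1 / 2 else 0

namespace killedWalk

variable {a b : ℤ}

theorem apply_nonneg (x y : Icc a b) : 0 ≤ killedWalk a b x y := by
  unfold killedWalk; split <;> norm_num

/-- Since `f` vanishes just outside `[a, b]`, the walk sees `f` as if it were not killed. -/
theorem mulVec_apply {f : ℤ → ℝ} (ha : f (a - 1) = 0) (hb : f (b + 1) = 0) (x : Icc a b) :
    (killedWalk a b *ᵥ fun y => f y) x = (f (x - 1) + f (x + 1)) / 2 := by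
  have hx := mem_Icc.1 x.2
  have hsplit : ∀ t, (if |x.1 - t| = 1 then (1 : ℝ) / 2 else 0) * f t =
      (if x.1 - 1 = t then f t / 2 else 0) + (if x.1 + 1 = t then f t / 2 else 0) := by
    intro t
    simp only [abs_eq zero_le_one]
    split_ifs <;> first | (exfalso; omega) | ring
  have hedge : ∀ t, (t = a - 1 ∨ t = b + 1 ∨ t ∈ Icc a b) →
      (if t ∈ Icc a b then f t / 2 else 0) = f t / 2 := by
    rintro t (rfl | rfl | ht)
    · simp [ha]
    · simp [hb]
    · simp [ht]
  simp only [mulVec, dotProduct, killedWalk]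
  rw [sum_coe_sort (Icc a b) fun t => (if |x.1 - t| = 1 then (1 : ℝ) / 2 else 0) * f t]
  simp only [hsplit, sum_add_distrib, sum_ite_eq]
  rw [hedge _ (by rw [mem_Icc]; omega), hedge _ (by rw [mem_Icc]; omega)]
  ring

theorem sum_apply_le_one (x : Icc a b) : ∑ y, killedWalk a b x y ≤ 1 := by
  let f : ℤ → ℝ := fun t => if t ∈ Icc a b then 1 else 0
  have h := mulVec_apply (f := f) (by simp [f]) (by simp [f]) x
  simp only [mulVec, dotProduct, f, coe_mem, ite_true, mul_one] at h
  rw [h]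
  split_ifs <;> norm_num

theorem mem_subStochastic : killedWalk a b ∈ Matrix.subStochastic ℝ (Icc a b) :=
  ⟨apply_nonneg, sum_apply_le_one⟩

theorem mulVec_cos {ℓ : ℤ} {θ : ℝ} (hθ : cos (θ * ℓ) = 0) :
    killedWalk (1 - ℓ) (ℓ - 1) *ᵥ (fun x => cos (θ * (x : ℤ))) =
      cos θ • fun x : Icc (1 - ℓ) (ℓ - 1) => cos (θ * (x : ℤ)) := by
  ext x
  rw [mulVec_apply (f := fun t : ℤ => cos (θ * t))]
  · push_cast
    rw [Pi.smul_apply, smul_eq_mul, mul_sub, mul_add, mul_one, cos_sub, cos_add]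
    ring
  · push_cast; rw [show θ * (1 - ℓ - 1) = -(θ * ℓ) by ring, cos_neg, hθ]
  · push_cast; rw [show θ * (ℓ - 1 + 1) = θ * ℓ by ring, hθ]

end killedWalk

/-- Survival probability lower bound for the continuous-time simple random walk
killed upon exiting `(-ℓ, ℓ)`: with `A` the substochastic transition matrix of
the killed discrete walk on `J = {x : |x| ≤ ℓ - 1}` and
`q_i = ∑_{y ∈ J} (A^i)(0, y)` the `i`-step survival probability, for all
`s ≥ 0` one has `∑_i e^{-s} s^i / i! · q_i ≥ exp(-(1 - cos(π/(2ℓ)))·s)`. -/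
theorem killed_srw_survival_lower (ℓ : ℕ) (hℓ : 1 ≤ ℓ) (s : ℝ) (hs : 0 ≤ s) :
    let θ : ℝ := π / (2 * (ℓ : ℝ))
    let J : Finset ℤ := Finset.Icc (1 - (ℓ : ℤ)) ((ℓ : ℤ) - 1)
    let A : Matrix J J ℝ := fun x y => if |x.1 - y.1| = 1 then 1/2 else 0
    let z : J := ⟨0, Finset.mem_Icc.mpr ⟨by omega, by omega⟩⟩
    ∑' i : ℕ, Real.exp (-s) * s ^ i / (Nat.factorial i : ℝ) * (∑ y : J, (A ^ i) z y) ≥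
      Real.exp (-(1 - Real.cos θ) * s) := by
  intro θ J A z
  have hA : A ∈ Matrix.subStochastic ℝ J := killedWalk.mem_subStochastic
  have hθ : cos (θ * ((ℓ : ℤ) : ℝ)) = 0 := by
    rw [Int.cast_natCast, div_mul_eq_mul_div, mul_div_mul_comm, div_self (by positivity), mul_one,
      cos_pi_div_two]
  refine exp_neg_mul_le_tsum_poisson_mul hs (fun i => ?_)
    (fun i => sum_nonneg fun y _ => pow_apply_nonneg hA.1 i z y)
    (fun i => ((Matrix.subStochastic ℝ J).pow_mem hA i).2 z)
  simpa [z] using pow_mul_le_sum_pow_apply hA.1 (killedWalk.mulVec_cos hθ)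
    (fun _ => cos_le_one _) i z
end

section
/- For s > 0 let p_s : ℕ → ℝ be the Poisson probability mass function p_s(x) = e^{−s}·s^x/x!. There exist constants c > 0 and C > 0 such that for every s ∈ (0, ∞) and every real r with r ≥ √s and s + r ∈ ℕ, writing N = s + r, one has c·r·(min(r/s, 1))·log(max(r/s, e)) ≤ −log( Σ_{x ≥ N} p_s(x) ) ≤ C·r·(min(r/s, 1))·log(max(r/s, e)). -/
/-!
Write `u = r / s`, so that `N = s (1 + u)`, and let `h(u) = (1 + u) log (1 + u) - u`.

The Chernoff bound gives `-log P(X_s ≥ N) ≥ s h(u)`, and `log (1 + u) ≥ 2u / (2 + u)` shows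
`h(u) ≥ u² / (2 + u)`, which is `≳ u min(u, 1) log max(u, e)`.

Conversely, if `u ≥ 1` the single term `p_s(N)` suffices, as `-log p_s(N) ≤ s + N log (1 + u)`.
If `u ≤ 1`, the `⌈s / r⌉` terms following `N` are each at least `e^{-6} p_s(N)`, and Stirling's
bound `N! ≤ e √N (N / e)^N` gives `-log p_s(N) ≤ s h(u) + (log N) / 2 + 1` with `s h(u) ≤ r² / s`.
The window factor `s / r` and the `√N ≍ √s` from Stirling combine to `log (r / √s) ≤ r² / s`,
and all constants are absorbed because `r ≥ √s` makes `r² / s ≥ 1`.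
-/

open Real

open scoped Nat

noncomputable section

def poissonWeight (s : ℝ) (x : ℕ) : ℝ := exp (-s) * s ^ x / x !

def poissonTail (s : ℝ) (N : ℕ) : ℝ := ∑' x : ℕ, if N ≤ x then poissonWeight s x else 0

def bennettH (u : ℝ) : ℝ := (1 + u) * log (1 + u) - u

end

section Bennett

variable {u : ℝ}

lemma two_mul_div_two_add_le_log_one_add (hu : 0 ≤ u) : 2 * u / (2 + u) ≤ log (1 + u) := by
  rcases hu.eq_or_lt with rfl | hu
  · simp
  -- the leading term of the series `log (1 + a⁻¹) = 2 ∑ (2a+1)^{-(2k+1)} / (2k+1)` at `a = u⁻¹`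
  have hsum := hasSum_log_one_add_inv (inv_pos.2 hu)
  rw [inv_inv] at hsum
  refine le_of_eq_of_le ?_ (le_hasSum hsum 0 fun k _ => by positivity)
  norm_num
  field_simp

lemma sq_div_two_add_le_bennettH (hu : 0 ≤ u) : u ^ 2 / (2 + u) ≤ bennettH u := by
  have h := two_mul_div_two_add_le_log_one_add hu
  calc u ^ 2 / (2 + u) = (1 + u) * (2 * u / (2 + u)) - u := by field_simp; ring
    _ ≤ bennettH u := by unfold bennettH; gcongr

lemma bennettH_le_sq (hu : 0 ≤ u) : bennettH u ≤ u ^ 2 := by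
  have h : log (1 + u) ≤ u := by linarith [log_le_sub_one_of_pos (by linarith : 0 < 1 + u)]
  unfold bennettH
  nlinarith

lemma mul_min_mul_log_max_le_bennettH (hu : 0 ≤ u) :
    u * min u 1 * log (max u (exp 1)) ≤ 8 * bennettH u := by
  have hsq := sq_div_two_add_le_bennettH hu
  rcases le_total u 1 with hu1 | hu1
  · rw [min_eq_left hu1, max_eq_right (hu1.trans (one_le_exp zero_le_one)), log_exp, mul_one]
    calc u * u ≤ 8 * (u ^ 2 / (2 + u)) := by
          rw [mul_div_assoc', le_div_iff₀ (by linarith)]; nlinarith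
      _ ≤ 8 * bennettH u := by gcongr
  rw [min_eq_right hu1, mul_one]
  have hL : log (max u (exp 1)) ≤ max (log (1 + u)) 1 := by
    rcases le_total u (exp 1) with h | h
    · rw [max_eq_right h, log_exp]; exact le_max_right _ _
    · rw [max_eq_left h]; exact (log_le_log (by linarith) (by linarith)).trans (le_max_left _ _)
  rcases le_total (log (1 + u)) 2 with hl | hl
  · calc u * log (max u (exp 1)) ≤ u * 2 := by gcongr; exact hL.trans (max_le hl one_le_two)
      _ ≤ 8 * (u ^ 2 / (2 + u)) := by
          rw [mul_div_assoc', le_div_iff₀ (by linarith)]; nlinarith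
      _ ≤ 8 * bennettH u := by gcongr
  · calc u * log (max u (exp 1)) ≤ u * log (1 + u) :=
          mul_le_mul_of_nonneg_left (hL.trans (max_le le_rfl (by linarith))) hu
      _ ≤ 8 * bennettH u := by unfold bennettH; nlinarith

end Bennett

lemma Nat.factorial_add_le_factorial_mul_pow (N k : ℕ) : (N + k)! ≤ N ! * (N + k) ^ k := by
  rw [← Nat.factorial_mul_ascFactorial]
  exact Nat.mul_le_mul_left _ (Nat.ascFactorial_le_pow_add N k)

lemma log_factorial_le_stirling {n : ℕ} (hn : n ≠ 0) :
    log n ! ≤ n * log n - n + log n / 2 + 1 := by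
  obtain ⟨m, rfl⟩ := Nat.exists_eq_add_one_of_ne_zero hn
  -- `log` of the Stirling sequence decreases from its value `1 - log 2 / 2` at `1`
  have h := Stirling.log_stirlingSeq'_antitone (Nat.zero_le m)
  simp only [Function.comp_apply, Stirling.log_stirlingSeq_formula] at h
  have hm : (0 : ℝ) < (m + 1 : ℕ) := by positivity
  rw [log_mul two_ne_zero hm.ne', log_div hm.ne' (exp_pos 1).ne', log_exp] at h
  push_cast at h ⊢
  norm_num at h
  linarith

section PoissonTail

variable {s : ℝ}

lemma poissonWeight_pos (hs : 0 < s) (x : ℕ) : 0 < poissonWeight s x := by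
  unfold poissonWeight; positivity

lemma neg_log_poissonWeight (hs : 0 < s) (N : ℕ) :
    -log (poissonWeight s N) = s - N * log s + log N ! := by
  unfold poissonWeight
  rw [log_div (by positivity) (by positivity), log_mul (by positivity) (by positivity), log_exp,
    log_pow]
  ring

lemma summable_poissonTail (hs : 0 ≤ s) (N : ℕ) :
    Summable fun x : ℕ => if N ≤ x then poissonWeight s x else 0 := by
  refine .of_nonneg_of_le (fun x => by unfold poissonWeight; split <;> positivity) (fun x => ?_)
    ((summable_pow_div_factorial s).mul_left (exp (-s)))
  unfold poissonWeight
  split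
  · rw [mul_div_assoc]
  · positivity

lemma poissonWeight_le_poissonTail (hs : 0 ≤ s) (N : ℕ) : poissonWeight s N ≤ poissonTail s N := by
  unfold poissonTail
  simpa using (summable_poissonTail hs N).le_tsum N
    (fun x _ => by unfold poissonWeight; split <;> positivity)

lemma poissonTail_pos (hs : 0 < s) (N : ℕ) : 0 < poissonTail s N :=
  (poissonWeight_pos hs N).trans_le (poissonWeight_le_poissonTail hs.le N)

lemma poissonTail_le_chernoff (hs : 0 < s) {N : ℕ} (hN : s ≤ N) :
    poissonTail s N ≤ exp (N - s) * (s / N) ^ N := by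
  have hN0 : (0 : ℝ) < N := hs.trans_le hN
  -- compare with the exponential series at `N`
  have hexp : HasSum (fun x : ℕ => exp (-s) * (s / N) ^ N * ((N : ℝ) ^ x / x !))
      (exp (-s) * (s / N) ^ N * exp N) := by
    rw [exp_eq_exp_ℝ]
    exact (NormedSpace.expSeries_div_hasSum_exp (N : ℝ)).mul_left _
  have hle (x : ℕ) : (if N ≤ x then poissonWeight s x else 0) ≤
      exp (-s) * (s / N) ^ N * ((N : ℝ) ^ x / x !) := by
    split
    case isFalse => positivity
    case isTrue hx =>
      have hpow : s ^ x ≤ (s / N) ^ N * (N : ℝ) ^ x :=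
        calc s ^ x = s ^ N * s ^ (x - N) := (pow_mul_pow_sub s hx).symm
          _ ≤ s ^ N * (N : ℝ) ^ (x - N) := by gcongr
          _ = (s / N) ^ N * (N : ℝ) ^ x := by
            rw [div_pow, ← pow_mul_pow_sub (N : ℝ) hx]; field_simp
      unfold poissonWeight
      rw [mul_assoc, mul_div_assoc', mul_div_assoc]
      gcongr
  calc poissonTail s N ≤ exp (-s) * (s / N) ^ N * exp N :=
        hasSum_le hle (summable_poissonTail hs.le N).hasSum hexp
    _ = exp (N - s) * (s / N) ^ N := by rw [exp_sub, exp_neg]; field_simp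

lemma poissonWeight_mul_pow_le (hs : 0 < s) {N M k : ℕ} (hk : k ≤ M) (hsNM : s ≤ N + M) :
    poissonWeight s N * (s / (N + M)) ^ M ≤ poissonWeight s (N + k) := by
  have hNM : (0 : ℝ) < N + M := hs.trans_le hsNM
  have hfact : ((N + k)! : ℝ) ≤ N ! * ((N : ℝ) + M) ^ k :=
    calc ((N + k)! : ℝ) ≤ N ! * ((N + k : ℕ) : ℝ) ^ k := by
          exact_mod_cast Nat.factorial_add_le_factorial_mul_pow N k
      _ ≤ N ! * ((N : ℝ) + M) ^ k := by push_cast; gcongr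
  calc poissonWeight s N * (s / (N + M)) ^ M ≤ poissonWeight s N * (s / (N + M)) ^ k :=
        mul_le_mul_of_nonneg_left
          (pow_le_pow_of_le_one (by positivity) ((div_le_one hNM).2 hsNM) hk)
          (poissonWeight_pos hs N).le
    _ = exp (-s) * s ^ (N + k) / (N ! * ((N : ℝ) + M) ^ k) := by
        unfold poissonWeight; rw [div_pow, pow_add]; field_simp
    _ ≤ poissonWeight s (N + k) := by unfold poissonWeight; gcongr

lemma mul_poissonWeight_mul_pow_le_poissonTail (hs : 0 < s) {N M : ℕ} (hsNM : s ≤ N + M) :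
    M * (poissonWeight s N * (s / (N + M)) ^ M) ≤ poissonTail s N :=
  calc (M : ℝ) * (poissonWeight s N * (s / (N + M)) ^ M)
        ≤ ∑ k ∈ Finset.range M, poissonWeight s (N + k) := by
        simpa using Finset.card_nsmul_le_sum (Finset.range M) _ _ fun k hk =>
          poissonWeight_mul_pow_le hs (Finset.mem_range.1 hk).le hsNM
    _ = ∑ x ∈ Finset.Ico N (N + M), if N ≤ x then poissonWeight s x else 0 := by
        rw [Finset.sum_Ico_eq_sum_range]; simp
    _ ≤ poissonTail s N := (summable_poissonTail hs.le N).sum_le_tsum _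
        fun x _ => by unfold poissonWeight; split <;> positivity

lemma mul_bennettH_div_eq (hs : s ≠ 0) {r : ℝ} (hsr : s + r ≠ 0) :
    s * bennettH (r / s) = (s + r) * (log (s + r) - log s) - r := by
  have h : 1 + r / s = (s + r) / s := by field_simp
  rw [bennettH, h, log_div hsr hs]
  field_simp

variable {r : ℝ} {N : ℕ}

lemma mul_bennettH_le_neg_log_poissonTail (hs : 0 < s) (hr : 0 ≤ r) (hN : (N : ℝ) = s + r) :
    s * bennettH (r / s) ≤ -log (poissonTail s N) := by
  have hN0 : (0 : ℝ) < N := by linarith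
  have h := log_le_log (poissonTail_pos hs N) (poissonTail_le_chernoff hs (by linarith))
  rw [log_mul (exp_pos _).ne' (by positivity), log_exp, log_pow, log_div hs.ne' hN0.ne'] at h
  rw [mul_bennettH_div_eq hs.ne' (by linarith), ← hN]
  linarith

lemma neg_log_poissonWeight_le_stirling (hs : 0 < s) (hr : 0 ≤ r) (hN : (N : ℝ) = s + r) :
    -log (poissonWeight s N) ≤ s * bennettH (r / s) + log N / 2 + 1 := by
  have hN0 : N ≠ 0 := by rintro rfl; simp at hN; linarith
  rw [neg_log_poissonWeight hs, mul_bennettH_div_eq hs.ne' (by linarith), ← hN]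
  linarith [log_factorial_le_stirling hN0]

lemma neg_log_poissonTail_le_of_le (hs : 0 < s) (hsr : s ≤ r) (hN : (N : ℝ) = s + r) :
    -log (poissonTail s N) ≤ 5 * r * log (max (r / s) (exp 1)) := by
  set L := log (max (r / s) (exp 1))
  have hr0 : 0 < r := hs.trans_le hsr
  have hN0 : (0 : ℝ) < N := by linarith
  have hL : 1 ≤ L := by simpa using log_le_log (exp_pos 1) (le_max_right (r / s) (exp 1))
  have hweight : -log (poissonTail s N) ≤ -log (poissonWeight s N) :=
    neg_le_neg (log_le_log (poissonWeight_pos hs N) (poissonWeight_le_poissonTail hs.le N))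
  have hfact : log N ! ≤ N * log N := by
    rw [← log_pow]
    exact log_le_log (by positivity) (by exact_mod_cast Nat.factorial_le_pow N)
  have hratio : log N - log s ≤ 2 * L := by
    calc log N - log s = log (N / s) := (log_div hN0.ne' hs.ne').symm
      _ ≤ log (2 * (r / s)) := log_le_log (by positivity) (by rw [hN]; field_simp; linarith)
      _ = log 2 + log (r / s) := log_mul two_ne_zero (by positivity)
      _ ≤ 1 + L := by
        gcongr
        · linarith [log_two_lt_d9]
        · exact log_le_log (by positivity) (le_max_left _ _)
      _ ≤ 2 * L := by linarith
  calc -log (poissonTail s N) ≤ s + N * (log N - log s) := by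
        rw [neg_log_poissonWeight hs] at hweight; linarith
    _ ≤ r * L + (2 * r) * (2 * L) := by
        gcongr
        · nlinarith
        · exact sub_nonneg.2 (log_le_log hs (by linarith))
        · linarith
    _ = 5 * r * L := by ring

lemma exp_neg_six_mul_poissonWeight_le_poissonTail (hs : 0 < s) (hr : √s ≤ r) (hrs : r ≤ s)
    (hN : (N : ℝ) = s + r) : exp (-6) * (s / r) * poissonWeight s N ≤ poissonTail s N := by
  have hr0 : 0 < r := (sqrt_pos.2 hs).trans_le hr
  have hsr2 : s ≤ r ^ 2 := (sqrt_le_iff.1 hr).2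
  set M := ⌈s / r⌉₊
  have hM1 : s / r ≤ M := Nat.le_ceil _
  have hMr : M * r ≤ 2 * s := by
    have : (M : ℝ) ≤ 2 * (s / r) := Nat.ceil_le_two_mul (by rw [le_div_iff₀ hr0]; linarith)
    rwa [mul_div_assoc', le_div_iff₀ hr0] at this
  have hMM : (M : ℝ) ^ 2 ≤ 4 * s := by
    refine le_of_mul_le_mul_right ?_ (by positivity : 0 < r ^ 2)
    nlinarith [mul_nonneg (M.cast_nonneg : (0 : ℝ) ≤ M) hr0.le]
  -- each of the `M` terms after `N` is at least `p_s(N) (1 + (r + M) / s)⁻¹ ^ M`, and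
  have hpow : exp (-6) ≤ (s / (N + M)) ^ M := by
    have hx : M * ((r + M) / s) ≤ 6 := by
      rw [mul_div_assoc', div_le_iff₀ hs]; nlinarith
    calc exp (-6) ≤ exp (-(M * ((r + M) / s))) := exp_le_exp.2 (by linarith)
      _ = (exp ((r + M) / s))⁻¹ ^ M := by rw [exp_neg, inv_pow, ← exp_nat_mul]
      _ ≤ (1 + (r + M) / s)⁻¹ ^ M := by
        gcongr
        linarith [add_one_le_exp ((r + M) / s)]
      _ = (s / (N + M)) ^ M := by rw [hN]; field_simp; ring
  calc exp (-6) * (s / r) * poissonWeight s N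
        ≤ M * (poissonWeight s N * (s / (N + M)) ^ M) := by
        have := poissonWeight_pos hs N
        calc exp (-6) * (s / r) * poissonWeight s N = s / r * (poissonWeight s N * exp (-6)) := by ring
          _ ≤ M * (poissonWeight s N * (s / (N + M)) ^ M) := by gcongr
    _ ≤ poissonTail s N := mul_poissonWeight_mul_pow_le_poissonTail hs (by rw [hN]; linarith)

lemma neg_log_poissonTail_le_of_sqrt_le_of_le (hs : 0 < s) (hr : √s ≤ r) (hrs : r ≤ s)
    (hN : (N : ℝ) = s + r) : -log (poissonTail s N) ≤ 9 * r * (r / s) := by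
  have hr0 : 0 < r := (sqrt_pos.2 hs).trans_le hr
  have hsr2 : s ≤ r ^ 2 := (sqrt_le_iff.1 hr).2
  have hwin := log_le_log (by positivity [poissonWeight_pos hs N])
    (exp_neg_six_mul_poissonWeight_le_poissonTail hs hr hrs hN)
  rw [log_mul (by positivity) (poissonWeight_pos hs N).ne', log_mul (by positivity) (by positivity),
    log_exp, log_div hs.ne' hr0.ne'] at hwin
  have hweight := neg_log_poissonWeight_le_stirling hs hr0.le hN
  have hbennett : s * bennettH (r / s) ≤ r * (r / s) :=
    calc s * bennettH (r / s) ≤ s * (r / s) ^ 2 := by gcongr; exact bennettH_le_sq (by positivity)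
      _ = r * (r / s) := by field_simp
  have hlogN : log N ≤ 1 + log s :=
    calc log N ≤ log (2 * s) := log_le_log (by linarith) (by linarith)
      _ = log 2 + log s := log_mul two_ne_zero hs.ne'
      _ ≤ 1 + log s := by linarith [log_two_lt_d9]
  have hrate : 1 ≤ r * (r / s) := by rw [mul_div_assoc', le_div_iff₀ hs]; nlinarith
  have hlogr : 2 * log r - log s ≤ r * (r / s) := by
    have h := log_le_self (by positivity : 0 ≤ r ^ 2 / s)
    rwa [log_div (by positivity) hs.ne', log_pow, Nat.cast_ofNat, sq, mul_div_assoc] at h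
  linarith

end PoissonTail

/-- Two-sided bound on the log of the Poisson upper tail: there are constants
`c, C > 0` such that uniformly in `s > 0` and `r ≥ √s` with `s + r = N ∈ ℕ`,
`-log P(X_s ≥ s + r) ≍ r·min(r/s, 1)·log(max(r/s, e))`. -/
theorem poisson_upper_tail_log_bounds : ∃ c C : ℝ, 0 < c ∧ 0 < C ∧
    ∀ (s r : ℝ), 0 < s → Real.sqrt s ≤ r → ∀ N : ℕ, (N : ℝ) = s + r →
      c * r * min (r/s) 1 * Real.log (max (r/s) (Real.exp 1)) ≤
        -Real.log (∑' x : ℕ, if N ≤ x then Real.exp (-s) * s ^ x / (Nat.factorial x : ℝ) else 0) ∧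
      -Real.log (∑' x : ℕ, if N ≤ x then Real.exp (-s) * s ^ x / (Nat.factorial x : ℝ) else 0) ≤
        C * r * min (r/s) 1 * Real.log (max (r/s) (Real.exp 1)) := by
  refine ⟨1 / 8, 9, by norm_num, by norm_num, fun s r hs hr N hN => ?_⟩
  have hr0 : 0 < r := (sqrt_pos.2 hs).trans_le hr
  refine ⟨?_, ?_⟩
  · have hrate := mul_le_mul_of_nonneg_left
      (mul_min_mul_log_max_le_bennettH (u := r / s) (by positivity)) hs.le
    calc 1 / 8 * r * min (r / s) 1 * log (max (r / s) (exp 1))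
          = s * (r / s * min (r / s) 1 * log (max (r / s) (exp 1))) / 8 := by field_simp
      _ ≤ s * bennettH (r / s) := by linarith
      _ ≤ -log (poissonTail s N) := mul_bennettH_le_neg_log_poissonTail hs hr0.le hN
  · rcases le_total r s with hrs | hsr
    · have hu : r / s ≤ 1 := (div_le_one hs).2 hrs
      rw [min_eq_left hu, max_eq_right (hu.trans (one_le_exp zero_le_one)), log_exp, mul_one]
      exact neg_log_poissonTail_le_of_sqrt_le_of_le hs hr hrs hN
    · rw [min_eq_right ((one_le_div hs).2 hsr), mul_one]
      have hL : 0 ≤ log (max (r / s) (exp 1)) :=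
        log_nonneg (le_max_of_le_right (one_le_exp zero_le_one))
      exact (neg_log_poissonTail_le_of_le hs hsr hN).trans
        (mul_le_mul_of_nonneg_right (by linarith) hL)
end
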